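/- Let μ ∈ R^d and ε ≥ 0, and suppose |μ_j| > ε for at least one coordinate j. Define the soft-thresholding operator T_ε(μ) by (T_ε(μ))_j = sgn(μ_j)·max{|μ_j| − ε, 0}. Then max over unit vectors w ∈ R^d (‖w‖₂ = 1) of μᵀw − ε‖w‖₁ equals ‖T_ε(μ)‖₂, and the maximum is attained at w = T_ε(μ)/‖T_ε(μ)‖₂. Consequently, among all linear classifiers f_w(x) = sgn(wᵀx) on the Gaussian mixture model x | y ~ N(yμ, σ²I_d), y uniform on {±1}, the ℓ∞-robust classification error at radius ε, which equals Q((μᵀw − ε‖w‖₁)/(σ‖w‖₂)), is minimized at w = T_ε(μ)/‖T_ε(μ)‖₂. -/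

import Mathlib

open MeasureTheory ProbabilityTheory

noncomputable section

/-- Euclidean (ℓ²) norm on `Fin d → ℝ`. -/
def nrm2 {d : ℕ} (x : Fin d → ℝ) : ℝ := Real.sqrt (∑ i, (x i) ^ 2)

/-- Euclidean inner product on `Fin d → ℝ`. -/
def ip {d : ℕ} (x y : Fin d → ℝ) : ℝ := ∑ i, x i * y i

/-- ℓ¹ norm on `Fin d → ℝ`. -/
def nrm1 {d : ℕ} (x : Fin d → ℝ) : ℝ := ∑ i, |x i|

/-- ℓ∞ norm on `Fin d → ℝ`. -/
def nrmInf {d : ℕ} (x : Fin d → ℝ) : ℝ := ⨆ i, |x i|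

/-- Gaussian measure `N(μ, σ² I)` on `Fin s → ℝ`. -/
def gaussPi {s : ℕ} (μ : Fin s → ℝ) (σ : ℝ) : Measure (Fin s → ℝ) :=
  Measure.pi fun i => gaussianReal (μ i) ⟨σ ^ 2, sq_nonneg σ⟩

/-- Labeled Gaussian model: `y` uniform on `{±1}` and `x | y ~ N(yμ, σ²I)`. -/
def gaussLabeled {d : ℕ} (μ : Fin d → ℝ) (σ : ℝ) : Measure ((Fin d → ℝ) × ℝ) :=
  (1 / 2 : ENNReal) • ((gaussPi μ σ).map fun x => (x, (1 : ℝ))) +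
  (1 / 2 : ENNReal) • ((gaussPi (-μ) σ).map fun x => (x, (-1 : ℝ)))

/-- The soft-thresholding operator `(T_ε(μ))_j = sgn(μ_j)·max{|μ_j| - ε, 0}`. -/
def softThresh {d : ℕ} (ε : ℝ) (μ : Fin d → ℝ) : Fin d → ℝ :=
  fun j => Real.sign (μ j) * max (|μ j| - ε) 0

/-- ℓ∞-robust classification error at radius `ε` of the linear classifier `f_w` on the
symmetric Gaussian mixture. -/
def linRobErr {d : ℕ} (μ : Fin d → ℝ) (σ ε : ℝ) (w : Fin d → ℝ) : ℝ :=
  ((gaussLabeled μ σ) {p | ∃ u, nrmInf (u - p.1) ≤ ε ∧ p.2 * ip w u ≤ 0}).toReal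

/-!
Coordinatewise, `μ_j w_j - ε |w_j| ≤ |T_ε(μ)_j| |w_j|`, with equality at `w = T_ε(μ)`, so by
Cauchy–Schwarz `μᵀw - ε‖w‖₁ ≤ ‖T_ε(μ)‖₂ ‖w‖₂`, attained at the normalized soft-thresholded vector.
The worst `ℓ∞`-perturbation of radius `ε` lowers the margin `y wᵀx` by exactly `ε ‖w‖₁`, and
`wᵀx ~ N(wᵀμ, σ²‖w‖₂²)` as a sum of independent Gaussians; hence the robust error is
`Φ((ε‖w‖₁ - μᵀw) / (σ‖w‖₂))`, decreasing in the normalized margin `(μᵀw - ε‖w‖₁) / ‖w‖₂`,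
which the first bound maximizes at `T_ε(μ)`.
-/

open scoped NNReal

namespace Real

lemma mul_sign_self (r : ℝ) : r * Real.sign r = |r| := by
  rcases lt_trichotomy r 0 with h | rfl | h
  · rw [Real.sign_of_neg h, abs_of_neg h, mul_neg_one]
  · simp
  · rw [Real.sign_of_pos h, abs_of_pos h, mul_one]

lemma abs_sign_le_one (r : ℝ) : |Real.sign r| ≤ 1 := by
  rcases Real.sign_apply_eq r with h | h | h <;> simp [h]

lemma abs_sign_of_ne_zero {r : ℝ} (hr : r ≠ 0) : |Real.sign r| = 1 := by
  rcases Real.sign_apply_eq_of_ne_zero r hr with h | h <;> simp [h]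

end Real

section Norms

variable {d : ℕ}

lemma ip_comm (x y : Fin d → ℝ) : ip x y = ip y x := by
  simp only [ip, mul_comm]

lemma ip_smul_right (x y : Fin d → ℝ) (c : ℝ) : ip x (c • y) = c * ip x y := by
  simp only [ip, Pi.smul_apply, smul_eq_mul, Finset.mul_sum, mul_left_comm]

lemma ip_sub_right (w x y : Fin d → ℝ) : ip w (x - y) = ip w x - ip w y := by
  simp only [ip, Pi.sub_apply, mul_sub, Finset.sum_sub_distrib]

lemma ip_neg_right (w x : Fin d → ℝ) : ip w (-x) = -ip w x := by
  simp only [ip, Pi.neg_apply, mul_neg, Finset.sum_neg_distrib]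

lemma measurable_ip (w : Fin d → ℝ) : Measurable (ip w) := by
  unfold ip; fun_prop

lemma nrm1_nonneg (w : Fin d → ℝ) : 0 ≤ nrm1 w :=
  Finset.sum_nonneg fun _ _ => abs_nonneg _

lemma nrm1_smul (c : ℝ) (x : Fin d → ℝ) : nrm1 (c • x) = |c| * nrm1 x := by
  simp only [nrm1, Pi.smul_apply, smul_eq_mul, abs_mul, Finset.mul_sum]

lemma nrm2_smul (c : ℝ) (x : Fin d → ℝ) : nrm2 (c • x) = |c| * nrm2 x := by
  simp only [nrm2, Pi.smul_apply, smul_eq_mul, mul_pow, ← Finset.mul_sum]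
  rw [Real.sqrt_mul (sq_nonneg c), Real.sqrt_sq_eq_abs]

lemma nrm2_sq (x : Fin d → ℝ) : nrm2 x ^ 2 = ∑ i, x i ^ 2 :=
  Real.sq_sqrt (Finset.sum_nonneg fun _ _ => sq_nonneg _)

lemma nrm2_pos {x : Fin d → ℝ} (hx : x ≠ 0) : 0 < nrm2 x := by
  obtain ⟨i, hi⟩ := Function.ne_iff.1 hx
  exact Real.sqrt_pos.2 <|
    Finset.sum_pos' (fun _ _ => sq_nonneg _) ⟨i, Finset.mem_univ i, sq_pos_of_ne_zero hi⟩

lemma nrm2_inv_smul_self {x : Fin d → ℝ} (hx : 0 < nrm2 x) : nrm2 ((nrm2 x)⁻¹ • x) = 1 := by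
  rw [nrm2_smul, abs_inv, abs_of_pos hx, inv_mul_cancel₀ hx.ne']

lemma abs_le_nrmInf (x : Fin d → ℝ) (i : Fin d) : |x i| ≤ nrmInf x :=
  le_ciSup (f := fun i => |x i|) (Set.finite_range _).bddAbove i

lemma nrmInf_le {x : Fin d → ℝ} {ε : ℝ} (hx : ∀ i, |x i| ≤ ε) (hε : 0 ≤ ε) : nrmInf x ≤ ε :=
  Real.iSup_le hx hε

lemma abs_ip_le_nrm1_mul_nrmInf (w x : Fin d → ℝ) : |ip w x| ≤ nrm1 w * nrmInf x := by
  simp only [ip, nrm1, Finset.sum_mul]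
  refine (Finset.abs_sum_le_sum_abs _ _).trans (Finset.sum_le_sum fun i _ => ?_)
  rw [abs_mul]
  exact mul_le_mul_of_nonneg_left (abs_le_nrmInf x i) (abs_nonneg _)

lemma ip_sub_nrm1_smul (μ : Fin d → ℝ) (ε : ℝ) {c : ℝ} (hc : 0 ≤ c) (w : Fin d → ℝ) :
    ip μ (c • w) - ε * nrm1 (c • w) = c * (ip μ w - ε * nrm1 w) := by
  rw [ip_smul_right, nrm1_smul, abs_of_nonneg hc]; ring

end Norms

section SoftThreshold

variable {d : ℕ} (μ : Fin d → ℝ) {ε : ℝ}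

lemma abs_softThresh (hε : 0 ≤ ε) (j : Fin d) : |softThresh ε μ j| = max (|μ j| - ε) 0 := by
  rcases eq_or_ne (μ j) 0 with h | h
  · simp [softThresh, h, hε]
  · rw [softThresh, abs_mul, Real.abs_sign_of_ne_zero h, one_mul,
      abs_of_nonneg (le_max_right _ _)]

lemma mul_softThresh_sub (hε : 0 ≤ ε) (j : Fin d) :
    μ j * softThresh ε μ j - ε * |softThresh ε μ j| = softThresh ε μ j ^ 2 := by
  have hmul : μ j * softThresh ε μ j = |μ j| * max (|μ j| - ε) 0 := by
    rw [softThresh, ← mul_assoc, Real.mul_sign_self]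
  rw [hmul, ← sq_abs, abs_softThresh μ hε]
  rcases le_total (|μ j| - ε) 0 with h | h
  · simp [max_eq_right h]
  · rw [max_eq_left h]; ring

lemma mul_sub_le_abs_softThresh_mul (hε : 0 ≤ ε) (j : Fin d) (t : ℝ) :
    μ j * t - ε * |t| ≤ |softThresh ε μ j| * |t| := by
  rw [abs_softThresh μ hε]
  calc μ j * t - ε * |t| ≤ (|μ j| - ε) * |t| := by
        linarith [(le_abs_self (μ j * t)).trans_eq (abs_mul _ _)]
    _ ≤ max (|μ j| - ε) 0 * |t| := by gcongr; exact le_max_left _ _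

lemma ip_sub_nrm1_softThresh (hε : 0 ≤ ε) :
    ip μ (softThresh ε μ) - ε * nrm1 (softThresh ε μ) = nrm2 (softThresh ε μ) ^ 2 := by
  simp only [ip, nrm1, nrm2_sq, Finset.mul_sum, ← Finset.sum_sub_distrib, mul_softThresh_sub μ hε]

lemma ip_sub_nrm1_le_nrm2_softThresh_mul (hε : 0 ≤ ε) (w : Fin d → ℝ) :
    ip μ w - ε * nrm1 w ≤ nrm2 (softThresh ε μ) * nrm2 w := by
  calc ip μ w - ε * nrm1 w ≤ ∑ i, |softThresh ε μ i| * |w i| := by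
        simp only [ip, nrm1, Finset.mul_sum, ← Finset.sum_sub_distrib]
        exact Finset.sum_le_sum fun i _ => mul_sub_le_abs_softThresh_mul μ hε i (w i)
    _ ≤ nrm2 (softThresh ε μ) * nrm2 w := by
        simpa only [nrm2, sq_abs] using Real.sum_mul_le_sqrt_mul_sqrt Finset.univ
          (fun i => |softThresh ε μ i|) (fun i => |w i|)

lemma nrm2_softThresh_pos (hε : 0 ≤ ε) (hbig : ∃ j, ε < |μ j|) : 0 < nrm2 (softThresh ε μ) := by
  obtain ⟨j, hj⟩ := hbig
  refine nrm2_pos (Function.ne_iff.2 ⟨j, fun h => ?_⟩)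
  have := abs_softThresh μ hε j
  rw [h, Pi.zero_apply, abs_zero, max_eq_left (by linarith)] at this
  linarith

end SoftThreshold

lemma exists_nrmInf_sub_le_and_mul_ip_nonpos_iff {d : ℕ} {ε : ℝ} (hε : 0 ≤ ε)
    (w x : Fin d → ℝ) (y : ℝ) :
    (∃ u, nrmInf (u - x) ≤ ε ∧ y * ip w u ≤ 0) ↔ y * ip w x ≤ ε * |y| * nrm1 w := by
  constructor
  · rintro ⟨u, hux, hu⟩
    have hdiff : |ip w (u - x)| ≤ nrm1 w * ε :=
      (abs_ip_le_nrm1_mul_nrmInf w _).trans (mul_le_mul_of_nonneg_left hux (nrm1_nonneg w))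
    rw [ip_sub_right] at hdiff
    have hshift : -(y * (ip w u - ip w x)) ≤ |y| * (nrm1 w * ε) :=
      (neg_le_abs _).trans (by rw [abs_mul]; gcongr)
    linarith
  · intro h
    refine ⟨x - fun i => ε * Real.sign (y * w i), nrmInf_le (fun i => ?_) hε, ?_⟩
    · simpa [abs_mul, abs_of_nonneg hε] using
        mul_le_mul_of_nonneg_left (Real.abs_sign_le_one (y * w i)) hε
    · have hmargin : y * ip w (fun i => ε * Real.sign (y * w i)) = ε * |y| * nrm1 w := by
        simp only [ip, nrm1, Finset.mul_sum]
        refine Finset.sum_congr rfl fun i _ => ?_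
        linear_combination ε * (Real.mul_sign_self (y * w i)).trans (abs_mul y (w i))
      rw [ip_sub_right, mul_sub, hmargin]
      linarith

namespace ProbabilityTheory

lemma map_finsetSum_eq_gaussianReal {Ω ι : Type*} {mΩ : MeasurableSpace Ω}
    {P : Measure Ω} [IsProbabilityMeasure P] {X : ι → Ω → ℝ} (hX : iIndepFun X P)
    (hXm : ∀ i, Measurable (X i)) {m : ι → ℝ} {v : ι → ℝ≥0}
    (hlaw : ∀ i, P.map (X i) = gaussianReal (m i) (v i)) (s : Finset ι) :
    P.map (∑ i ∈ s, X i) = gaussianReal (∑ i ∈ s, m i) (∑ i ∈ s, v i) := by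
  classical
  induction s using Finset.induction_on with
  | empty =>
    simp only [Finset.sum_empty, gaussianReal_zero_var]
    exact (Measure.map_const P 0).trans (by simp)
  | insert i s hi ih =>
    rw [Finset.sum_insert hi, Finset.sum_insert hi, Finset.sum_insert hi, add_comm (X i),
      add_comm (m i), add_comm (v i)]
    exact gaussianReal_add_gaussianReal_of_indepFun
      (hX.indepFun_finsetSum_of_notMem hXm hi) ih (hlaw i)

lemma gaussianReal_Iic_eq_std {m c s : ℝ} {v : ℝ≥0} (hs : 0 < s) (hv : (v : ℝ) = s ^ 2) :
    gaussianReal m v (Set.Iic c) = gaussianReal 0 1 (Set.Iic ((c - m) / s)) := by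
  have hstd : (gaussianReal m v).map (fun x => (x - m) / s) = gaussianReal 0 1 := by
    rw [show (fun x => (x - m) / s) = (· / s) ∘ (· - m) from rfl,
      ← Measure.map_map (by fun_prop) (by fun_prop), gaussianReal_map_sub_const,
      gaussianReal_map_div_const, sub_self, zero_div]
    congr
    ext
    simp [hv, hs.ne']
  rw [← hstd, Measure.map_apply (by fun_prop) measurableSet_Iic]
  congr
  ext x
  simp [div_le_div_iff_of_pos_right hs]

lemma gaussianReal_neg_Ici_neg (m c : ℝ) (v : ℝ≥0) :
    gaussianReal (-m) v (Set.Ici (-c)) = gaussianReal m v (Set.Iic c) := by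
  rw [← gaussianReal_map_neg, Measure.map_apply measurable_neg measurableSet_Ici]
  congr
  ext x
  simp

end ProbabilityTheory

section GaussianMixture

variable {d : ℕ}

-- The anonymous constructor in `gaussPi` hides the `ℝ≥0` instances from typeclass search.
lemma gaussPi_eq_pi (m : Fin d → ℝ) (σ : ℝ) :
    gaussPi m σ = Measure.pi fun i => gaussianReal (m i) (.mk (σ ^ 2) (sq_nonneg σ)) :=
  rfl

lemma gaussPi_map_ip (m : Fin d → ℝ) (σ : ℝ) (w : Fin d → ℝ) :
    (gaussPi m σ).map (ip w) =
      gaussianReal (ip w m) (∑ i, .mk (w i ^ 2) (sq_nonneg _) * .mk (σ ^ 2) (sq_nonneg σ)) := by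
  set P := Measure.pi fun i => gaussianReal (m i) (.mk (σ ^ 2) (sq_nonneg σ))
  have hX : iIndepFun (fun i (x : Fin d → ℝ) => w i * x i) P :=
    iIndepFun_pi (X := fun i t => w i * t) fun i => by fun_prop
  have hlaw (i : Fin d) : P.map (fun x => w i * x i) =
      gaussianReal (w i * m i) (.mk (w i ^ 2) (sq_nonneg _) * .mk (σ ^ 2) (sq_nonneg σ)) := by
    rw [← gaussianReal_map_const_mul, ← (measurePreserving_eval
        (fun j => gaussianReal (m j) (.mk (σ ^ 2) (sq_nonneg σ))) i).map_eq,
      Measure.map_map (by fun_prop) (by fun_prop)]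
    rfl
  have hsum : ip w = ∑ i, fun x : Fin d → ℝ => w i * x i := by
    ext x; simp [ip]
  rw [gaussPi_eq_pi, hsum, map_finsetSum_eq_gaussianReal hX (fun i => by fun_prop) hlaw,
    Finset.sum_apply]

lemma linRobErr_eq_gaussianReal_Iic (μ : Fin d → ℝ) (σ : ℝ) {ε : ℝ} (hε : 0 ≤ ε)
    (w : Fin d → ℝ) :
    linRobErr μ σ ε w = (gaussianReal (ip w μ)
      (∑ i, .mk (w i ^ 2) (sq_nonneg _) * .mk (σ ^ 2) (sq_nonneg σ))
      (Set.Iic (ε * nrm1 w))).toReal := by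
  have hpos : (fun x => (x, (1 : ℝ))) ⁻¹' {p | ∃ u, nrmInf (u - p.1) ≤ ε ∧ p.2 * ip w u ≤ 0} =
      ip w ⁻¹' Set.Iic (ε * nrm1 w) := by
    ext x
    simp [exists_nrmInf_sub_le_and_mul_ip_nonpos_iff hε]
  have hneg : (fun x => (x, (-1 : ℝ))) ⁻¹' {p | ∃ u, nrmInf (u - p.1) ≤ ε ∧ p.2 * ip w u ≤ 0} =
      ip w ⁻¹' Set.Ici (-(ε * nrm1 w)) := by
    ext x
    simp [exists_nrmInf_sub_le_and_mul_ip_nonpos_iff hε, neg_le]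
  rw [linRobErr, gaussLabeled, Measure.add_apply, Measure.smul_apply, Measure.smul_apply,
    (measurableEmbedding_prod_mk_right _).map_apply,
    (measurableEmbedding_prod_mk_right _).map_apply, hpos, hneg,
    ← Measure.map_apply (measurable_ip w) measurableSet_Iic,
    ← Measure.map_apply (measurable_ip w) measurableSet_Ici, gaussPi_map_ip, gaussPi_map_ip,
    ip_neg_right, gaussianReal_neg_Ici_neg, smul_eq_mul, ← add_mul, ENNReal.add_halves, one_mul]

lemma linRobErr_eq_gaussianReal_std (μ : Fin d → ℝ) {σ : ℝ} (hσ : 0 < σ) {ε : ℝ}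
    (hε : 0 ≤ ε) {w : Fin d → ℝ} (hw : w ≠ 0) :
    linRobErr μ σ ε w =
      (gaussianReal 0 1 (Set.Iic ((ε * nrm1 w - ip μ w) / (σ * nrm2 w)))).toReal := by
  rw [linRobErr_eq_gaussianReal_Iic μ σ hε, ip_comm,
    gaussianReal_Iic_eq_std (mul_pos hσ (nrm2_pos hw))]
  push_cast
  rw [mul_pow, nrm2_sq, Finset.mul_sum]
  exact Finset.sum_congr rfl fun _ _ => mul_comm _ _

end GaussianMixture

/-- soft-thresholding maximizes `μᵀw - ε‖w‖₁` over the unit sphere and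
minimizes the ℓ∞-robust error among linear classifiers. -/
theorem soft_thresholding_optimal
    {d : ℕ} (μ : Fin d → ℝ) (ε : ℝ) (hε : 0 ≤ ε)
    (hbig : ∃ j, ε < |μ j|) (σ : ℝ) (hσ : 0 < σ) :
    (nrm2 ((nrm2 (softThresh ε μ))⁻¹ • softThresh ε μ) = 1) ∧
    (ip μ ((nrm2 (softThresh ε μ))⁻¹ • softThresh ε μ)
        - ε * nrm1 ((nrm2 (softThresh ε μ))⁻¹ • softThresh ε μ)
      = nrm2 (softThresh ε μ)) ∧
    (∀ w : Fin d → ℝ, nrm2 w = 1 → ip μ w - ε * nrm1 w ≤ nrm2 (softThresh ε μ)) ∧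
    (∀ w : Fin d → ℝ, w ≠ 0 →
      linRobErr μ σ ε ((nrm2 (softThresh ε μ))⁻¹ • softThresh ε μ)
        ≤ linRobErr μ σ ε w) := by
  set T := softThresh ε μ
  have hT : 0 < nrm2 T := nrm2_softThresh_pos μ hε hbig
  have hunit : nrm2 ((nrm2 T)⁻¹ • T) = 1 := nrm2_inv_smul_self hT
  have hle : ∀ w, ip μ w - ε * nrm1 w ≤ nrm2 T * nrm2 w :=
    ip_sub_nrm1_le_nrm2_softThresh_mul μ hε
  have hval : ip μ ((nrm2 T)⁻¹ • T) - ε * nrm1 ((nrm2 T)⁻¹ • T) = nrm2 T := by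
    rw [ip_sub_nrm1_smul μ ε (inv_nonneg.2 hT.le), ip_sub_nrm1_softThresh μ hε, sq,
      inv_mul_cancel_left₀ hT.ne']
  refine ⟨hunit, hval, fun w hw => by simpa [hw] using hle w, fun w hw => ?_⟩
  have hT0 : (nrm2 T)⁻¹ • T ≠ 0 := fun h => by rw [h] at hunit; simp [nrm2] at hunit
  rw [linRobErr_eq_gaussianReal_std μ hσ hε hT0, linRobErr_eq_gaussianReal_std μ hσ hε hw]
  refine ENNReal.toReal_mono (measure_ne_top _ _) (measure_mono (Set.Iic_subset_Iic.2 ?_))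
  rw [show ε * nrm1 ((nrm2 T)⁻¹ • T) - ip μ ((nrm2 T)⁻¹ • T) = -nrm2 T by linarith, hunit,
    mul_one, div_le_div_iff₀ hσ (mul_pos hσ (nrm2_pos hw))]
  linarith [mul_le_mul_of_nonneg_left (hle w) hσ.le]

end
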